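/- arXiv:2403.13157 — 4 statements merged into one kernel-verified Lean document; each statement's English description precedes it below -/
import Mathlib

section
/- Let σ, t, β be real numbers with β ≥ 0, and let 1 ≤ M₁ < M₂. Then |∑_{M₁ < m ≤ M₂} m^{-(σ+it)}| ≤ 4 M₂^β · max_{M₁ < y ≤ M₂} |∑_{M₁ < m ≤ y} m^{-(σ+β+it)}|. -/
open Finset Complex

/-
Write m^{-(σ+it)} = m^β · m^{-(σ+β+it)}. Abel summation against the increasing weight m ↦ m^β
bounds the sum by (2 N^β - (a+1)^β) times the largest partial sum of the m^{-(σ+β+it)}, where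
a = ⌊M₁⌋ and N = ⌊M₂⌋; that partial sum is attained at some integer y ∈ (M₁, M₂].
-/

section AbelSummation

variable {E : Type*} [SeminormedAddCommGroup E] [NormedSpace ℝ E]

theorem norm_sum_Ioc_smul_sub_smul_sum_le {w : ℕ → ℝ} (hw : Monotone w) (f : ℕ → E)
    {a n : ℕ} (han : a < n) {C : ℝ} (hC : ∀ k ∈ Ioc a n, ‖∑ m ∈ Ioc a k, f m‖ ≤ C) :
    ‖∑ m ∈ Ioc a n, w m • f m - w n • ∑ m ∈ Ioc a n, f m‖ ≤ (w n - w (a + 1)) * C := by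
  induction n, han using Nat.le_induction with
  | base => simp [Nat.Ioc_succ_singleton]
  | succ n han ih =>
    have hCn : ‖∑ m ∈ Ioc a n, f m‖ ≤ C := hC n (mem_Ioc.2 ⟨han, n.le_succ⟩)
    have ih' := ih fun k hk ↦ hC k (Ioc_subset_Ioc_right n.le_succ hk)
    have hstep : 0 ≤ w (n + 1) - w n := sub_nonneg.2 (hw n.le_succ)
    rw [sum_Ioc_succ_top (Nat.le_of_succ_le han), sum_Ioc_succ_top (Nat.le_of_succ_le han)]
    calc ‖∑ m ∈ Ioc a n, w m • f m + w (n + 1) • f (n + 1)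
            - w (n + 1) • (∑ m ∈ Ioc a n, f m + f (n + 1))‖
        = ‖(∑ m ∈ Ioc a n, w m • f m - w n • ∑ m ∈ Ioc a n, f m)
            - (w (n + 1) - w n) • ∑ m ∈ Ioc a n, f m‖ := by
          rw [smul_add, sub_smul]; abel_nf
      _ ≤ (w n - w (a + 1)) * C + (w (n + 1) - w n) * C := by
          refine (norm_sub_le _ _).trans (add_le_add ih' ?_)
          rw [norm_smul, Real.norm_of_nonneg hstep]
          exact mul_le_mul_of_nonneg_left hCn hstep
      _ = (w (n + 1) - w (a + 1)) * C := by ring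

theorem exists_norm_sum_Ioc_smul_le {w : ℕ → ℝ} (hw : Monotone w) (f : ℕ → E)
    {a n : ℕ} (han : a < n) (hw₀ : 0 ≤ w (a + 1)) :
    ∃ k ∈ Ioc a n, ‖∑ m ∈ Ioc a n, w m • f m‖ ≤ 2 * w n * ‖∑ m ∈ Ioc a k, f m‖ := by
  obtain ⟨k, hk, hmax⟩ := exists_max_image (Ioc a n) (fun k ↦ ‖∑ m ∈ Ioc a k, f m‖)
    ⟨n, mem_Ioc.2 ⟨han, le_rfl⟩⟩
  refine ⟨k, hk, ?_⟩
  have habel := norm_sum_Ioc_smul_sub_smul_sum_le hw f han hmax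
  have hn := hmax n (mem_Ioc.2 ⟨han, le_rfl⟩)
  have hwn : 0 ≤ w n := hw₀.trans (hw han)
  calc ‖∑ m ∈ Ioc a n, w m • f m‖
      ≤ ‖∑ m ∈ Ioc a n, w m • f m - w n • ∑ m ∈ Ioc a n, f m‖
          + ‖w n • ∑ m ∈ Ioc a n, f m‖ := norm_le_norm_sub_add _ _
    _ ≤ (w n - w (a + 1)) * ‖∑ m ∈ Ioc a k, f m‖ + w n * ‖∑ m ∈ Ioc a k, f m‖ := by
        rw [norm_smul, Real.norm_of_nonneg hwn]
        exact add_le_add habel (mul_le_mul_of_nonneg_left hn hwn)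
    _ ≤ 2 * w n * ‖∑ m ∈ Ioc a k, f m‖ := by nlinarith [norm_nonneg (∑ m ∈ Ioc a k, f m)]

end AbelSummation

theorem monotone_natCast_rpow {β : ℝ} (hβ : 0 ≤ β) : Monotone fun m : ℕ ↦ (m : ℝ) ^ β :=
  fun _ _ h ↦ Real.rpow_le_rpow (Nat.cast_nonneg _) (Nat.cast_le.2 h) hβ

theorem natCast_cpow_eq_rpow_smul_cpow {m : ℕ} (hm : m ≠ 0) (s : ℂ) (β : ℝ) :
    (m : ℂ) ^ s = ((m : ℝ) ^ β) • (m : ℂ) ^ (s - β) := by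
  rw [Complex.real_smul, Complex.ofReal_cpow (Nat.cast_nonneg m), Complex.ofReal_natCast,
    ← Complex.cpow_add _ _ (Nat.cast_ne_zero.2 hm), add_sub_cancel]

/-- Partial summation comparison, case β ≥ 0. -/
theorem stmt_0 (σ t β M₁ M₂ : ℝ) (hβ : 0 ≤ β) (hM₁ : 1 ≤ M₁) (hM : M₁ < M₂) :
    ∃ y ∈ Set.Ioc M₁ M₂,
      ‖∑ m ∈ Finset.Ioc ⌊M₁⌋₊ ⌊M₂⌋₊, (m : ℂ) ^ (-((σ : ℂ) + t * Complex.I))‖ ≤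
        4 * M₂ ^ β *
          ‖∑ m ∈ Finset.Ioc ⌊M₁⌋₊ ⌊y⌋₊, (m : ℂ) ^ (-((σ : ℂ) + (β : ℂ) + t * Complex.I))‖ := by
  have hM₂ : 0 ≤ M₂ := by linarith
  rcases le_or_gt ⌊M₂⌋₊ ⌊M₁⌋₊ with hle | hlt
  · refine ⟨M₂, ⟨hM, le_rfl⟩, ?_⟩
    rw [Ioc_eq_empty (not_lt.2 hle), sum_empty, norm_zero]
    positivity
  have hsum : ∑ m ∈ Ioc ⌊M₁⌋₊ ⌊M₂⌋₊, (m : ℂ) ^ (-((σ : ℂ) + t * Complex.I)) =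
      ∑ m ∈ Ioc ⌊M₁⌋₊ ⌊M₂⌋₊, ((m : ℝ) ^ β) • (m : ℂ) ^ (-((σ : ℂ) + β + t * Complex.I)) := by
    refine sum_congr rfl fun m hm ↦ ?_
    rw [natCast_cpow_eq_rpow_smul_cpow (by grind) _ β]
    ring_nf
  obtain ⟨k, hk, hbound⟩ := exists_norm_sum_Ioc_smul_le (monotone_natCast_rpow hβ)
    (fun m : ℕ ↦ (m : ℂ) ^ (-((σ : ℂ) + β + t * Complex.I))) hlt (by positivity)
  rw [mem_Ioc] at hk
  refine ⟨k, ⟨(Nat.floor_lt (by linarith)).1 hk.1, (Nat.le_floor_iff hM₂).1 hk.2⟩, ?_⟩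
  have hN : (⌊M₂⌋₊ : ℝ) ^ β ≤ M₂ ^ β := Real.rpow_le_rpow (by positivity) (Nat.floor_le hM₂) hβ
  rw [hsum, Nat.floor_natCast]
  refine hbound.trans (mul_le_mul_of_nonneg_right ?_ (norm_nonneg _))
  linarith [Real.rpow_nonneg (Nat.cast_nonneg ⌊M₂⌋₊) β]
end

section
/- Let σ, t, β be real numbers with β < 0, and let 1 ≤ M₁ < M₂. Then |∑_{M₁ < m ≤ M₂} m^{-(σ+it)}| ≤ 4 M₁^β · max_{M₁ < y ≤ M₂} |∑_{M₁ < m ≤ y} m^{-(σ+β+it)}|. -/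
/-!
Write `m^{-(σ+it)} = m^β · m^{-(σ+β+it)}`. For `β < 0` the weights `m^β` are positive and
decreasing, so Abel summation bounds the weighted sum by the first weight `(⌊M₁⌋ + 1)^β ≤ M₁^β`
times the largest partial sum `‖∑_{M₁ < m ≤ n} m^{-(σ+β+it)}‖` over integers `n ∈ (M₁, M₂]`.
-/

open Finset Complex

section AbelInequality

variable {E : Type*} [SeminormedAddCommGroup E] [NormedSpace ℝ E]

theorem norm_sum_Ioc_smul_sub_smul_le (c : ℕ → ℝ) (f : ℕ → E) {a b : ℕ} (hab : a < b)
    (hc : AntitoneOn c (Set.Icc (a + 1) b)) {B : ℝ}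
    (hB : ∀ n ∈ Ioc a b, ‖∑ m ∈ Ioc a n, f m‖ ≤ B) :
    ‖∑ i ∈ Ioc a b, c i • f i - c b • ∑ m ∈ Ioc a b, f m‖ ≤ (c (a + 1) - c b) * B := by
  induction b, hab using Nat.le_induction with
  | base => simp [Nat.Ioc_succ_singleton]
  | succ b hb ih =>
    have hcb : c (b + 1) ≤ c b :=
      hc ⟨hb, by omega⟩ ⟨by omega, le_rfl⟩ (Nat.le_succ b)
    have hSb := hB b (mem_Ioc.2 ⟨hb, by omega⟩)
    have ih := ih (hc.mono (Set.Icc_subset_Icc_right (Nat.le_succ b)))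
      fun n hn => hB n (mem_Ioc.2 ⟨(mem_Ioc.1 hn).1, (mem_Ioc.1 hn).2.trans b.le_succ⟩)
    have hstep : ∑ i ∈ Ioc a (b + 1), c i • f i - c (b + 1) • ∑ m ∈ Ioc a (b + 1), f m =
        (∑ i ∈ Ioc a b, c i • f i - c b • ∑ m ∈ Ioc a b, f m)
          + (c b - c (b + 1)) • ∑ m ∈ Ioc a b, f m := by
      rw [sum_Ioc_succ_top (by omega), sum_Ioc_succ_top (by omega), smul_add, sub_smul]
      abel
    calc _ ≤ (c (a + 1) - c b) * B + (c b - c (b + 1)) * B := by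
          rw [hstep]
          refine (norm_add_le _ _).trans (add_le_add ih ?_)
          rw [norm_smul, Real.norm_of_nonneg (sub_nonneg.2 hcb)]
          exact mul_le_mul_of_nonneg_left hSb (sub_nonneg.2 hcb)
      _ = (c (a + 1) - c (b + 1)) * B := by ring

theorem norm_sum_Ioc_smul_le (c : ℕ → ℝ) (f : ℕ → E) {a b : ℕ} (hab : a < b)
    (hc : AntitoneOn c (Set.Icc (a + 1) b)) (hcb : 0 ≤ c b) {B : ℝ}
    (hB : ∀ n ∈ Ioc a b, ‖∑ m ∈ Ioc a n, f m‖ ≤ B) :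
    ‖∑ i ∈ Ioc a b, c i • f i‖ ≤ c (a + 1) * B := by
  have hSb : ‖c b • ∑ m ∈ Ioc a b, f m‖ ≤ c b * B := by
    rw [norm_smul, Real.norm_of_nonneg hcb]
    exact mul_le_mul_of_nonneg_left (hB b (mem_Ioc.2 ⟨hab, le_rfl⟩)) hcb
  calc _ ≤ (c (a + 1) - c b) * B + c b * B :=
        (norm_le_norm_sub_add _ (c b • ∑ m ∈ Ioc a b, f m)).trans
          (add_le_add (norm_sum_Ioc_smul_sub_smul_le c f hab hc hB) hSb)
    _ = c (a + 1) * B := by ring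

end AbelInequality

theorem natCast_cpow_eq_rpow_smul_cpow_sub {n : ℕ} (hn : n ≠ 0) (β : ℝ) (s : ℂ) :
    (n : ℂ) ^ s = ((n : ℝ) ^ β) • (n : ℂ) ^ (s - β) := by
  rw [Complex.real_smul, Complex.ofReal_cpow n.cast_nonneg, Complex.ofReal_natCast,
    ← Complex.cpow_add _ _ (Nat.cast_ne_zero.2 hn), add_sub_cancel]

theorem antitoneOn_natCast_rpow {β : ℝ} (hβ : β ≤ 0) :
    AntitoneOn (fun m : ℕ => (m : ℝ) ^ β) (Set.Ici 1) := fun _ hi _ _ hij =>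
  Real.rpow_le_rpow_of_nonpos (by exact_mod_cast Nat.lt_of_lt_of_le one_pos hi)
    (by exact_mod_cast hij) hβ

/-- Partial summation comparison, case β < 0. -/
theorem stmt_1 (σ t β M₁ M₂ : ℝ) (hβ : β < 0) (hM₁ : 1 ≤ M₁) (hM : M₁ < M₂) :
    ∃ y ∈ Set.Ioc M₁ M₂,
      ‖∑ m ∈ Finset.Ioc ⌊M₁⌋₊ ⌊M₂⌋₊, (m : ℂ) ^ (-((σ : ℂ) + t * Complex.I))‖ ≤
        4 * M₁ ^ β *
          ‖∑ m ∈ Finset.Ioc ⌊M₁⌋₊ ⌊y⌋₊, (m : ℂ) ^ (-((σ : ℂ) + (β : ℂ) + t * Complex.I))‖ := by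
  set N₁ := ⌊M₁⌋₊
  set N₂ := ⌊M₂⌋₊
  have hM₁pos : 0 < M₁ := one_pos.trans_le hM₁
  rcases le_or_gt N₂ N₁ with hle | hlt
  · refine ⟨M₂, ⟨hM, le_rfl⟩, ?_⟩
    rw [Ioc_eq_empty_of_le hle, sum_empty, norm_zero]
    have := Real.rpow_pos_of_pos hM₁pos β
    positivity
  set S : ℕ → ℂ := fun n => ∑ m ∈ Ioc N₁ n, (m : ℂ) ^ (-((σ : ℂ) + (β : ℂ) + t * Complex.I))
  obtain ⟨n₀, hn₀, hmax⟩ :=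
    exists_max_image (Ioc N₁ N₂) (fun n => ‖S n‖) ⟨N₂, mem_Ioc.2 ⟨hlt, le_rfl⟩⟩
  have hN₁ : M₁ < N₁ + 1 := Nat.lt_floor_add_one M₁
  refine ⟨n₀, ⟨hN₁.trans_le (by exact_mod_cast (mem_Ioc.1 hn₀).1),
    (Nat.cast_le.2 (mem_Ioc.1 hn₀).2).trans (Nat.floor_le (by linarith))⟩, ?_⟩
  rw [Nat.floor_natCast]
  have hterm : ∀ m ∈ Ioc N₁ N₂, (m : ℂ) ^ (-((σ : ℂ) + t * Complex.I)) =
      ((m : ℝ) ^ β) • (m : ℂ) ^ (-((σ : ℂ) + (β : ℂ) + t * Complex.I)) := fun m hm => by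
    rw [natCast_cpow_eq_rpow_smul_cpow_sub (by have := (mem_Ioc.1 hm).1; omega) β]
    ring_nf
  have hc : ((N₁ + 1 : ℕ) : ℝ) ^ β ≤ M₁ ^ β :=
    Real.rpow_le_rpow_of_nonpos hM₁pos (by push_cast; linarith) hβ.le
  calc _ ≤ ((N₁ + 1 : ℕ) : ℝ) ^ β * ‖S n₀‖ := by
        rw [sum_congr rfl hterm]
        exact norm_sum_Ioc_smul_le _ _ hlt
          ((antitoneOn_natCast_rpow hβ.le).mono fun i hi => le_trans (by omega) hi.1)
          (by positivity) hmax
    _ ≤ M₁ ^ β * ‖S n₀‖ := by gcongr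
    _ ≤ 4 * M₁ ^ β * ‖S n₀‖ := by
        have := Real.rpow_pos_of_pos hM₁pos β
        gcongr
        linarith
end

section
/- Let σ, t, β be real numbers and 1 ≤ M₁ < M₂. Then |∑_{M₁ < m ≤ M₂} m^{-(σ+it)}| ≤ 2(M₂^β + M₁^β) · max_{M₁ < y ≤ M₂} |∑_{M₁ < m ≤ y} m^{-(σ+β+it)}|. -/
open Finset Complex

/-!
With `c m = m ^ β`, each term `m ^ (-(σ + it))` is `c m • m ^ (-(σ + β + it))`. Summation by parts
against the partial sums `S m = ∑_{M₁ < k ≤ m} k ^ (-(σ + β + it))` bounds the sum by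
`(|c b| + ∑ |c (m + 1) - c m|) * max ‖S‖` with `b = ⌊M₂⌋`. For either sign of `β` the weights are
monotone, so their variation telescopes to `|c b - c (⌊M₁⌋ + 1)|`, and both values of `c` lie in
`[0, M₂ ^ β + M₁ ^ β]`.
-/

section PartialSummation

variable {R M : Type*} [Ring R] [AddCommGroup M] [Module R M]

theorem Finset.sum_Ioc_smul_eq_sub_sum_Ioo (c : ℕ → R) (g : ℕ → M) {a b : ℕ} (hab : a < b) :
    ∑ m ∈ Ioc a b, c m • g m =
      c b • ∑ k ∈ Ioc a b, g k - ∑ m ∈ Ioo a b, (c (m + 1) - c m) • ∑ k ∈ Ioc a m, g k := by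
  induction b, hab using Nat.le_induction with
  | base => simp [Ioo_add_one_right_eq_Ioc]
  | succ n hab ih =>
    replace hab : a < n := hab
    rw [Ioo_add_one_right_eq_Ioc, ← Ioo_insert_right hab, sum_insert (by simp),
      sum_Ioc_succ_top hab.le, sum_Ioc_succ_top hab.le, ih]
    simp only [smul_add, sub_smul]
    abel

end PartialSummation

section VariationBound

variable {E : Type*} [SeminormedAddCommGroup E] [NormedSpace ℝ E] {a b : ℕ}

theorem norm_sum_Ioc_smul_le_s2 (c : ℕ → ℝ) (g : ℕ → E) (hab : a < b) {K : ℝ}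
    (hK : ∀ m ∈ Ioc a b, ‖∑ k ∈ Ioc a m, g k‖ ≤ K) :
    ‖∑ m ∈ Ioc a b, c m • g m‖ ≤ (|c b| + ∑ m ∈ Ioo a b, |c (m + 1) - c m|) * K := by
  rw [sum_Ioc_smul_eq_sub_sum_Ioo c g hab, add_mul, sum_mul]
  refine (norm_sub_le _ _).trans (add_le_add ?_ ((norm_sum_le _ _).trans (sum_le_sum ?_)))
  · rw [norm_smul, Real.norm_eq_abs]
    exact mul_le_mul_of_nonneg_left (hK b (right_mem_Ioc.2 hab)) (abs_nonneg _)
  · intro m hm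
    rw [norm_smul, Real.norm_eq_abs]
    exact mul_le_mul_of_nonneg_left (hK m (Ioo_subset_Ioc_self hm)) (abs_nonneg _)

theorem sum_Ioo_abs_sub_eq_of_monotoneOn {c : ℕ → ℝ} (hab : a < b)
    (hc : MonotoneOn c (Set.Icc (a + 1) b)) :
    ∑ m ∈ Ioo a b, |c (m + 1) - c m| = |c b - c (a + 1)| := by
  have hstep : ∀ m ∈ Ioo a b, |c (m + 1) - c m| = c (m + 1) - c m := by
    intro m hm
    obtain ⟨ham, hmb⟩ := mem_Ioo.1 hm
    exact abs_of_nonneg (sub_nonneg.2 (hc ⟨by omega, by omega⟩ ⟨by omega, by omega⟩ (by omega)))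
  rw [sum_congr rfl hstep, ← Ico_add_one_left_eq_Ioo, sum_Ico_sub c (show a + 1 ≤ b from hab),
    abs_of_nonneg (sub_nonneg.2 (hc ⟨le_rfl, hab⟩ ⟨hab, le_rfl⟩ hab))]

theorem sum_Ioo_abs_sub_eq_of_antitoneOn {c : ℕ → ℝ} (hab : a < b)
    (hc : AntitoneOn c (Set.Icc (a + 1) b)) :
    ∑ m ∈ Ioo a b, |c (m + 1) - c m| = |c b - c (a + 1)| := by
  simpa only [Pi.neg_apply, neg_sub_neg, abs_sub_comm] using
    sum_Ioo_abs_sub_eq_of_monotoneOn hab hc.neg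

theorem exists_norm_sum_Ioc_smul_le_s2 (c : ℕ → ℝ) (g : ℕ → E) (hab : a < b)
    (hc : MonotoneOn c (Set.Icc (a + 1) b) ∨ AntitoneOn c (Set.Icc (a + 1) b))
    (hc₀ : ∀ m ∈ Ioc a b, 0 ≤ c m) {C : ℝ} (hC : ∀ m ∈ Ioc a b, c m ≤ C) :
    ∃ n ∈ Ioc a b, ‖∑ m ∈ Ioc a b, c m • g m‖ ≤ 2 * C * ‖∑ k ∈ Ioc a n, g k‖ := by
  obtain ⟨n, hn, hmax⟩ := exists_max_image (Ioc a b) (fun m ↦ ‖∑ k ∈ Ioc a m, g k‖)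
    ⟨b, right_mem_Ioc.2 hab⟩
  refine ⟨n, hn, (norm_sum_Ioc_smul_le_s2 c g hab hmax).trans ?_⟩
  have hvar : ∑ m ∈ Ioo a b, |c (m + 1) - c m| = |c b - c (a + 1)| :=
    hc.elim (sum_Ioo_abs_sub_eq_of_monotoneOn hab) (sum_Ioo_abs_sub_eq_of_antitoneOn hab)
  have ha : a + 1 ∈ Ioc a b := mem_Ioc.2 ⟨a.lt_succ_self, hab⟩
  have hb : b ∈ Ioc a b := right_mem_Ioc.2 hab
  have hcb : |c b| ≤ C := (abs_of_nonneg (hc₀ b hb)).trans_le (hC b hb)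
  have hdiff : |c b - c (a + 1)| ≤ C :=
    abs_sub_le_of_nonneg_of_le (hc₀ b hb) (hC b hb) (hc₀ _ ha) (hC _ ha)
  rw [hvar, two_mul]
  gcongr

end VariationBound

theorem Complex.ofReal_cpow_add_eq_rpow_smul {x : ℝ} (hx : 0 < x) (β : ℝ) (s : ℂ) :
    (x : ℂ) ^ ((β : ℂ) + s) = x ^ β • (x : ℂ) ^ s := by
  rw [cpow_add _ _ (ofReal_ne_zero.2 hx.ne'), ← ofReal_cpow hx.le, real_smul]

theorem Real.rpow_le_add_rpow_of_mem_Icc {x y z : ℝ} (hy : 0 < y) (hx : x ∈ Set.Icc y z)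
    (β : ℝ) : x ^ β ≤ z ^ β + y ^ β := by
  have hz : 0 < z := hy.trans_le (hx.1.trans hx.2)
  rcases le_total 0 β with hβ | hβ
  · have := rpow_le_rpow (hy.le.trans hx.1) hx.2 hβ
    linarith [rpow_pos_of_pos hy β]
  · have := rpow_le_rpow_of_nonpos hy hx.1 hβ
    linarith [rpow_pos_of_pos hz β]

theorem monotoneOn_or_antitoneOn_natCast_rpow (β : ℝ) :
    MonotoneOn (fun m : ℕ ↦ (m : ℝ) ^ β) (Set.Ici 1) ∨
      AntitoneOn (fun m : ℕ ↦ (m : ℝ) ^ β) (Set.Ici 1) := by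
  rcases le_total 0 β with hβ | hβ
  · exact Or.inl fun m _ n _ hmn ↦ Real.rpow_le_rpow m.cast_nonneg (Nat.cast_le.2 hmn) hβ
  · exact Or.inr fun m hm n _ hmn ↦
      Real.rpow_le_rpow_of_nonpos (Nat.cast_pos.2 hm) (Nat.cast_le.2 hmn) hβ

/-- Partial summation comparison, general β. -/
theorem stmt_2 (σ t β M₁ M₂ : ℝ) (hM₁ : 1 ≤ M₁) (hM : M₁ < M₂) :
    ∃ y ∈ Set.Ioc M₁ M₂,
      ‖∑ m ∈ Finset.Ioc ⌊M₁⌋₊ ⌊M₂⌋₊, (m : ℂ) ^ (-((σ : ℂ) + t * Complex.I))‖ ≤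
        2 * (M₂ ^ β + M₁ ^ β) *
          ‖∑ m ∈ Finset.Ioc ⌊M₁⌋₊ ⌊y⌋₊, (m : ℂ) ^ (-((σ : ℂ) + (β : ℂ) + t * Complex.I))‖ := by
  have hM₁₀ : 0 < M₁ := one_pos.trans_le hM₁
  have hC : 0 ≤ M₂ ^ β + M₁ ^ β :=
    add_nonneg (Real.rpow_nonneg (hM₁₀.trans hM).le β) (Real.rpow_nonneg hM₁₀.le β)
  rcases le_or_gt ⌊M₂⌋₊ ⌊M₁⌋₊ with hempty | hab
  · refine ⟨M₂, ⟨hM, le_rfl⟩, ?_⟩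
    rw [Ioc_eq_empty_of_le hempty, sum_empty, norm_zero]
    positivity
  have hmem : ∀ m ∈ Ioc ⌊M₁⌋₊ ⌊M₂⌋₊, (m : ℝ) ∈ Set.Ioc M₁ M₂ := fun m hm ↦
    ⟨(Nat.floor_lt hM₁₀.le).1 (mem_Ioc.1 hm).1,
      (Nat.le_floor_iff (hM₁₀.trans hM).le).1 (mem_Ioc.1 hm).2⟩
  have hsplit : ∀ m ∈ Ioc ⌊M₁⌋₊ ⌊M₂⌋₊, (m : ℂ) ^ (-((σ : ℂ) + t * I)) =
      (m : ℝ) ^ β • (m : ℂ) ^ (-((σ : ℂ) + (β : ℂ) + t * I)) := fun m hm ↦ by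
    rw [← ofReal_natCast, ← ofReal_cpow_add_eq_rpow_smul (hM₁₀.trans (hmem m hm).1)]
    ring_nf
  have hIcc : Set.Icc (⌊M₁⌋₊ + 1) ⌊M₂⌋₊ ⊆ Set.Ici 1 := fun m hm ↦ (Nat.le_add_left 1 _).trans hm.1
  obtain ⟨n, hn, hle⟩ := exists_norm_sum_Ioc_smul_le_s2 (fun m : ℕ ↦ (m : ℝ) ^ β)
    (fun m : ℕ ↦ (m : ℂ) ^ (-((σ : ℂ) + (β : ℂ) + t * I))) hab
    ((monotoneOn_or_antitoneOn_natCast_rpow β).imp (·.mono hIcc) (·.mono hIcc))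
    (fun m _ ↦ Real.rpow_nonneg m.cast_nonneg β)
    (fun m hm ↦ Real.rpow_le_add_rpow_of_mem_Icc hM₁₀ (Set.Ioc_subset_Icc_self (hmem m hm)) β)
  refine ⟨n, hmem n hn, ?_⟩
  rwa [Nat.floor_natCast, sum_congr rfl hsplit]
end

section
/- Let T ≥ 3, ν ∈ [0, 1/2], and ε, η ∈ (0,1) with T ≥ 4^{2/(εη)}. If t ∈ [−T, T] satisfies |∑_{M < m ≤ M'} m^{-(1+it)}| ≥ M^{-ν} for some real M ∈ [T^ε, T^{1/2}/2] and M' ∈ (M, 2M], then there exist reals A, B with 1 ≤ A ≤ B ≤ T^{1/2}, B ≤ 2A, such that |∑_{A < n ≤ B} n^{-(1-ν-η+it)}| ≥ T^{εη/2}. -/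
open Finset Complex

/-! Write `m^{-(1+it)} = m^{-(ν+η)} · m^{-(1-ν-η+it)}`. The weight `m^{-(ν+η)}` is decreasing, so
Abel summation bounds the dyadic sum at `1 + it` by `M^{-(ν+η)}` times the largest partial sum at
`1 - ν - η + it` over `(⌊M⌋, k]` with `k ≤ M'`. Hence that partial sum is at least
`M^η ≥ T^{εη}`, and `A = M`, `B = k` are the required endpoints. -/

theorem sum_Ioc_smul_eq_by_parts {R E : Type*} [CommRing R] [AddCommGroup E] [Module R E]
    (w : ℕ → R) (b : ℕ → E) {m N : ℕ} (hmN : m ≤ N) :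
    ∑ n ∈ Ioc m N, w n • b n =
      w (N + 1) • ∑ n ∈ Ioc m N, b n +
        ∑ k ∈ Ioc m N, (w k - w (k + 1)) • ∑ n ∈ Ioc m k, b n := by
  induction N, hmN using Nat.le_induction with
  | base => simp
  | succ N hmN ih =>
    rw [sum_Ioc_succ_top hmN, sum_Ioc_succ_top hmN, sum_Ioc_succ_top hmN, ih,
      sum_Ioc_succ_top hmN]
    module

theorem sum_Ioc_sub_succ_eq {G : Type*} [AddCommGroup G] (w : ℕ → G) {m N : ℕ} (hmN : m ≤ N) :
    ∑ k ∈ Ioc m N, (w k - w (k + 1)) = w (m + 1) - w (N + 1) := by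
  induction N, hmN using Nat.le_induction with
  | base => simp
  | succ N hmN ih => rw [sum_Ioc_succ_top hmN, ih]; abel

theorem norm_sum_Ioc_smul_le_s8 {E : Type*} [SeminormedAddCommGroup E] [NormedSpace ℝ E]
    (w : ℕ → ℝ) (b : ℕ → E) {m N : ℕ} (hmN : m < N) (hw : AntitoneOn w (Set.Icc (m + 1) (N + 1)))
    (hw0 : 0 ≤ w (N + 1)) {C : ℝ} (hC : ∀ k ∈ Ioc m N, ‖∑ n ∈ Ioc m k, b n‖ ≤ C) :
    ‖∑ n ∈ Ioc m N, w n • b n‖ ≤ w (m + 1) * C := by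
  have hstep : ∀ k ∈ Ioc m N, 0 ≤ w k - w (k + 1) := fun k hk => by
    obtain ⟨hk₁, hk₂⟩ := mem_Ioc.mp hk
    exact sub_nonneg.mpr (hw ⟨by omega, by omega⟩ ⟨by omega, by omega⟩ (Nat.le_succ k))
  rw [sum_Ioc_smul_eq_by_parts w b hmN.le]
  calc _ ≤ ‖w (N + 1) • ∑ n ∈ Ioc m N, b n‖ +
          ∑ k ∈ Ioc m N, ‖(w k - w (k + 1)) • ∑ n ∈ Ioc m k, b n‖ :=
        (norm_add_le _ _).trans (by gcongr; exact norm_sum_le _ _)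
    _ ≤ w (N + 1) * C + ∑ k ∈ Ioc m N, (w k - w (k + 1)) * C := by
        gcongr with k hk
        · rw [norm_smul, Real.norm_of_nonneg hw0]
          exact mul_le_mul_of_nonneg_left (hC N (right_mem_Ioc.mpr hmN)) hw0
        · rw [norm_smul, Real.norm_of_nonneg (hstep k hk)]
          exact mul_le_mul_of_nonneg_left (hC k hk) (hstep k hk)
    _ = w (m + 1) * C := by rw [← sum_mul, sum_Ioc_sub_succ_eq w hmN.le]; ring

theorem exists_norm_sum_Ioc_smul_le_s8 {E : Type*} [SeminormedAddCommGroup E] [NormedSpace ℝ E]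
    (w : ℕ → ℝ) (b : ℕ → E) {m N : ℕ} (hmN : m < N) (hw : AntitoneOn w (Set.Icc (m + 1) (N + 1)))
    (hw0 : 0 ≤ w (N + 1)) :
    ∃ k ∈ Ioc m N, ‖∑ n ∈ Ioc m N, w n • b n‖ ≤ w (m + 1) * ‖∑ n ∈ Ioc m k, b n‖ := by
  obtain ⟨k, hk, hmax⟩ := exists_max_image (Ioc m N) (fun k => ‖∑ n ∈ Ioc m k, b n‖)
    ⟨N, right_mem_Ioc.mpr hmN⟩
  exact ⟨k, hk, norm_sum_Ioc_smul_le_s8 w b hmN hw hw0 hmax⟩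

theorem cpow_neg_one_add_eq_rpow_smul {x : ℝ} (hx : 0 < x) (σ t : ℝ) :
    (x : ℂ) ^ (-((1 : ℂ) + t * I)) = x ^ (σ - 1) • (x : ℂ) ^ (-((σ : ℂ) + t * I)) := by
  rw [Complex.real_smul, Complex.ofReal_cpow hx.le, ← Complex.cpow_add _ _ (by exact_mod_cast hx.ne')]
  congr 1
  push_cast
  ring

theorem antitoneOn_natCast_rpow_s8 {σ : ℝ} (hσ : σ ≤ 1) :
    AntitoneOn (fun n : ℕ => (n : ℝ) ^ (σ - 1)) (Set.Ici 1) := fun a ha b _ hab =>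
  Real.rpow_le_rpow_of_nonpos (by exact_mod_cast ha) (by exact_mod_cast hab) (by linarith)

theorem exists_norm_sum_cpow_le (σ t : ℝ) (hσ : σ ≤ 1) {m N : ℕ} (hmN : m < N) :
    ∃ k ∈ Ioc m N, ‖∑ n ∈ Ioc m N, (n : ℂ) ^ (-((1 : ℂ) + t * I))‖ ≤
      ((m + 1 : ℕ) : ℝ) ^ (σ - 1) * ‖∑ n ∈ Ioc m k, (n : ℂ) ^ (-((σ : ℂ) + t * I))‖ := by
  have hsplit : ∑ n ∈ Ioc m N, (n : ℂ) ^ (-((1 : ℂ) + t * I)) =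
      ∑ n ∈ Ioc m N, ((n : ℝ) ^ (σ - 1)) • (n : ℂ) ^ (-((σ : ℂ) + t * I)) :=
    sum_congr rfl fun n hn => by
      exact_mod_cast cpow_neg_one_add_eq_rpow_smul (x := n)
        (by exact_mod_cast (Nat.zero_le m).trans_lt (mem_Ioc.mp hn).1) σ t
  rw [hsplit]
  exact exists_norm_sum_Ioc_smul_le_s8 _ _ hmN
    ((antitoneOn_natCast_rpow_s8 hσ).mono fun n hn => le_trans (by omega) hn.1)
    (Real.rpow_nonneg (Nat.cast_nonneg _) _)

theorem exists_rpow_mul_le_norm_sum_cpow {M M' σ t x : ℝ} (hM : 0 < M) (hσ : σ ≤ 1)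
    (hx : 0 < x) (h : x ≤ ‖∑ n ∈ Ioc ⌊M⌋₊ ⌊M'⌋₊, (n : ℂ) ^ (-((1 : ℂ) + t * I))‖) :
    ∃ k ∈ Ioc ⌊M⌋₊ ⌊M'⌋₊,
      M ^ (1 - σ) * x ≤ ‖∑ n ∈ Ioc ⌊M⌋₊ k, (n : ℂ) ^ (-((σ : ℂ) + t * I))‖ := by
  have hmN : ⌊M⌋₊ < ⌊M'⌋₊ := by
    by_contra hle
    rw [Ioc_eq_empty hle, sum_empty, norm_zero] at h
    exact hx.not_ge h
  obtain ⟨k, hk, hle⟩ := exists_norm_sum_cpow_le σ t hσ hmN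
  refine ⟨k, hk, ?_⟩
  have hweight : ((⌊M⌋₊ + 1 : ℕ) : ℝ) ^ (σ - 1) ≤ M ^ (σ - 1) :=
    Real.rpow_le_rpow_of_nonpos hM (by push_cast; exact (Nat.lt_floor_add_one M).le)
      (by linarith)
  have hcancel : M ^ (1 - σ) * M ^ (σ - 1) = 1 := by
    rw [← Real.rpow_add hM, sub_add_sub_cancel', sub_self, Real.rpow_zero]
  calc M ^ (1 - σ) * x
      ≤ M ^ (1 - σ) * (M ^ (σ - 1) * ‖∑ n ∈ Ioc ⌊M⌋₊ k, (n : ℂ) ^ (-((σ : ℂ) + t * I))‖) := by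
        gcongr
        exact h.trans (hle.trans (by gcongr))
    _ = _ := by rw [← mul_assoc, hcancel, one_mul]

theorem stmt_8_general (T ν ε η t : ℝ) (hT : 3 ≤ T) (hν : ν ∈ Set.Icc 0 (1/2))
    (hε : ε ∈ Set.Ioo 0 1) (hη : η ∈ Set.Ioo 0 1)
    (h : ∃ M M' : ℝ, T ^ ε ≤ M ∧ M ≤ T ^ ((1 : ℝ)/2) / 2 ∧ M < M' ∧ M' ≤ 2 * M ∧
      M ^ (-ν) ≤ ‖∑ m ∈ Finset.Ioc ⌊M⌋₊ ⌊M'⌋₊, (m : ℂ) ^ (-((1 : ℂ) + t * Complex.I))‖) :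
    ∃ A B : ℝ, 1 ≤ A ∧ A ≤ B ∧ B ≤ T ^ ((1 : ℝ)/2) ∧ B ≤ 2 * A ∧
      T ^ (ε * η / 2) ≤
        ‖∑ n ∈ Finset.Ioc ⌊A⌋₊ ⌊B⌋₊,
            (n : ℂ) ^ (-(((1 - ν - η : ℝ) : ℂ) + t * Complex.I))‖ := by
  obtain ⟨M, M', hMε, hMT, hMM', hM2, hbig⟩ := h
  have hT1 : 1 ≤ T := by linarith
  have hM1 : 1 ≤ M := (Real.one_le_rpow hT1 hε.1.le).trans hMε
  have hM0 : 0 < M := by linarith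
  obtain ⟨k, hk, hlarge⟩ := exists_rpow_mul_le_norm_sum_cpow (σ := 1 - ν - η) hM0
    (by linarith [hν.1, hη.1]) (Real.rpow_pos_of_pos hM0 _) hbig
  have hMk : M ≤ k := (Nat.lt_floor_add_one M).le.trans (by exact_mod_cast (mem_Ioc.mp hk).1)
  have hkM' : (k : ℝ) ≤ M' :=
    (Nat.cast_le.mpr (mem_Ioc.mp hk).2).trans (Nat.floor_le (by linarith))
  refine ⟨M, k, hM1, hMk, by linarith, by linarith, ?_⟩
  rw [Nat.floor_natCast]
  calc T ^ (ε * η / 2) ≤ T ^ (ε * η) :=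
        Real.rpow_le_rpow_of_exponent_le hT1 (by nlinarith [hε.1, hη.1])
    _ = (T ^ ε) ^ η := Real.rpow_mul (by linarith) ε η
    _ ≤ M ^ η := Real.rpow_le_rpow (by positivity) hMε hη.1.le
    _ = M ^ (1 - (1 - ν - η)) * M ^ (-ν) := by rw [← Real.rpow_add hM0]; ring_nf
    _ ≤ _ := hlarge

/-- Lemma le_density1: containment of large-value sets via partial summation. -/
theorem stmt_8 (T ν ε η t : ℝ) (hT : 3 ≤ T) (hν : ν ∈ Set.Icc 0 (1/2))
    (hε : ε ∈ Set.Ioo 0 1) (hη : η ∈ Set.Ioo 0 1)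
    (hT4 : (4 : ℝ) ^ (2 / (ε * η)) ≤ T) (ht : t ∈ Set.Icc (-T) T)
    (h : ∃ M M' : ℝ, T ^ ε ≤ M ∧ M ≤ T ^ ((1 : ℝ)/2) / 2 ∧ M < M' ∧ M' ≤ 2 * M ∧
      M ^ (-ν) ≤ ‖∑ m ∈ Finset.Ioc ⌊M⌋₊ ⌊M'⌋₊, (m : ℂ) ^ (-((1 : ℂ) + t * Complex.I))‖) :
    ∃ A B : ℝ, 1 ≤ A ∧ A ≤ B ∧ B ≤ T ^ ((1 : ℝ)/2) ∧ B ≤ 2 * A ∧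
      T ^ (ε * η / 2) ≤
        ‖∑ n ∈ Finset.Ioc ⌊A⌋₊ ⌊B⌋₊,
            (n : ℂ) ^ (-(((1 - ν - η : ℝ) : ℂ) + t * Complex.I))‖ :=
  stmt_8_general T ν ε η t hT hν hε hη h
end
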